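/- arXiv:math/9808043 — 2 statements merged into one kernel-verified Lean document; each statement's English description precedes it below -/
import Mathlib

section
/- On smooth functions φ : ℝ² → ℝ of variables (x,t), the operators 𝒫 = Δ_x (forward space difference with step σ), ℋ = ∂_t, 𝓜 = m (multiplication by constant m), and 𝒦 = 2t·Δ_x + m(2x + σ)·T_x^{-1} satisfy the Galilei commutation relations [𝒦, 𝒫] = −2𝓜, [𝒦, ℋ] = −2𝒫, [ℋ, 𝒫] = 0, and [𝓜, ·] = 0. -/
noncomputable section

/-- Forward space difference with step `σ`. -/
def Dx (σ : ℝ) (φ : ℝ → ℝ → ℝ) : ℝ → ℝ → ℝ := fun x t => (φ (x + σ) t - φ x t) / σ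

/-- Inverse space shift `T_x^{-1}`. -/
def Tinv (σ : ℝ) (φ : ℝ → ℝ → ℝ) : ℝ → ℝ → ℝ := fun x t => φ (x - σ) t

/-- Time derivative `∂_t`. -/
def Dt (φ : ℝ → ℝ → ℝ) : ℝ → ℝ → ℝ := fun x t => deriv (φ x) t

/-- Discrete Galilean boost `𝒦 = 2t·Δ_x + m(2x+σ)·T_x^{-1}`. -/
def Kop (σ m : ℝ) (φ : ℝ → ℝ → ℝ) : ℝ → ℝ → ℝ :=
  fun x t => 2 * t * Dx σ φ x t + m * (2 * x + σ) * Tinv σ φ x t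

/-- Multiplication by the constant `m`. -/
def Mop (m : ℝ) (φ : ℝ → ℝ → ℝ) : ℝ → ℝ → ℝ := fun x t => m * φ x t

theorem discrete_space_galilei_relations (σ m : ℝ) (hσ : σ ≠ 0)
    (φ : ℝ → ℝ → ℝ) (hφ : ContDiff ℝ (⊤ : ℕ∞) (fun p : ℝ × ℝ => φ p.1 p.2)) :
    (∀ x t, Kop σ m (Dx σ φ) x t - Dx σ (Kop σ m φ) x t = -2 * Mop m φ x t) ∧
    (∀ x t, Kop σ m (Dt φ) x t - Dt (Kop σ m φ) x t = -2 * Dx σ φ x t) ∧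
    (∀ x t, Dt (Dx σ φ) x t - Dx σ (Dt φ) x t = 0) ∧
    (∀ x t, Mop m (Kop σ m φ) x t - Kop σ m (Mop m φ) x t = 0) ∧
    (∀ x t, Mop m (Dt φ) x t - Dt (Mop m φ) x t = 0) ∧
    (∀ x t, Mop m (Dx σ φ) x t - Dx σ (Mop m φ) x t = 0) := by
  have key : ∀ x t, HasDerivAt (fun t => φ x t) (Dt φ x t) t := by
    intro x t
    have hd : Differentiable ℝ (fun t => φ x t) :=
      (hφ.differentiable (by simp)).comp (f := fun t => (x, t)) ((differentiable_const x).prodMk differentiable_id)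
    exact (hd t).hasDerivAt
  have hDtDx : ∀ x t, Dt (Dx σ φ) x t = (Dt φ (x + σ) t - Dt φ x t) / σ := by
    intro x t
    have h : HasDerivAt (fun t => (φ (x + σ) t - φ x t) / σ)
        ((Dt φ (x + σ) t - Dt φ x t) / σ) t := ((key (x + σ) t).sub (key x t)).div_const σ
    exact h.deriv
  have hDtK : ∀ x t, Dt (Kop σ m φ) x t =
      2 * Dx σ φ x t + 2 * t * ((Dt φ (x + σ) t - Dt φ x t) / σ)
        + m * (2 * x + σ) * Dt φ (x - σ) t := by
    intro x t
    have h1 : HasDerivAt (fun t : ℝ => 2 * t) 2 t := by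
      simpa using (hasDerivAt_id t).const_mul (2 : ℝ)
    have h2 : HasDerivAt (fun t => Dx σ φ x t)
        ((Dt φ (x + σ) t - Dt φ x t) / σ) t :=
      ((key (x + σ) t).sub (key x t)).div_const σ
    have h3 := (h1.mul h2).add ((key (x - σ) t).const_mul (m * (2 * x + σ)))
    have h3' : HasDerivAt (fun t => Kop σ m φ x t)
        (2 * Dx σ φ x t + 2 * t * ((Dt φ (x + σ) t - Dt φ x t) / σ)
          + m * (2 * x + σ) * Dt φ (x - σ) t) t := by
      simpa [Kop, Tinv, Pi.add_def, Pi.mul_def, mul_comm, mul_assoc, mul_left_comm] using h3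
    exact h3'.deriv
  refine ⟨?_, ?_, ?_, ?_, ?_, ?_⟩
  · intro x t
    simp only [Kop, Dx, Tinv, Mop]
    field_simp
    ring
  · intro x t
    rw [hDtK]
    simp only [Kop, Dx, Tinv, hDtDx]
    field_simp
    ring
  · intro x t
    rw [hDtDx]
    simp only [Dx]
    ring
  · intro x t
    simp only [Kop, Dx, Tinv, Mop]
    ring
  · intro x t
    have h : Dt (Mop m φ) x t = m * Dt φ x t := ((key x t).const_mul m).deriv
    simp only [Mop, h]
    ring
  · intro x t
    simp only [Mop, Dx]
    field_simp
    ring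
end
end

section
/- The operator E = Δ_x² − 2m∂_t (acting on smooth functions of (x,t)) commutes with each of the operators 𝒫 = Δ_x, ℋ = ∂_t, 𝓜 = m, and 𝒦 = 2t·Δ_x + m(2x+σ)·T_x^{-1}: [E, X] = 0 for X ∈ {𝒦, ℋ, 𝒫, 𝓜}. -/
noncomputable section

/-- Space-discretized Schrödinger operator `E = Δ_x² − 2m∂_t`. -/
def Eop (σ m : ℝ) (φ : ℝ → ℝ → ℝ) : ℝ → ℝ → ℝ :=
  fun x t => Dx σ (Dx σ φ) x t - 2 * m * Dt φ x t

theorem discrete_space_schrodinger_symmetries (σ m : ℝ) (hσ : σ ≠ 0)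
    (φ : ℝ → ℝ → ℝ) (hφ : ContDiff ℝ (⊤ : ℕ∞) (fun p : ℝ × ℝ => φ p.1 p.2)) :
    (∀ x t, Eop σ m (Kop σ m φ) x t - Kop σ m (Eop σ m φ) x t = 0) ∧
    (∀ x t, Eop σ m (Dt φ) x t - Dt (Eop σ m φ) x t = 0) ∧
    (∀ x t, Eop σ m (Dx σ φ) x t - Dx σ (Eop σ m φ) x t = 0) ∧
    (∀ x t, Eop σ m (Mop m φ) x t - Mop m (Eop σ m φ) x t = 0) := by
  -- smoothness of slices
  have hx : ∀ a : ℝ, ContDiff ℝ (⊤ : ℕ∞) (φ a) := fun a => by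
    have := hφ.comp ((contDiff_const (c := a)).prodMk contDiff_id)
    exact this
  have hd : ∀ a : ℝ, Differentiable ℝ (φ a) := fun a => (hx a).differentiable (by simp)
  have hd2 : ∀ a : ℝ, Differentiable ℝ (deriv (φ a)) :=
    fun a => ((contDiff_infty_iff_deriv.mp ((hx a).of_le (by simp))).2).differentiable (by simp)
  refine ⟨?_, ?_, ?_, ?_⟩
  · intro x t
    have h : ∀ a : ℝ, HasDerivAt (φ a) (deriv (φ a) t) t := fun a => (hd a t).hasDerivAt
    have hK : HasDerivAt
        (fun y => 2 * y * ((φ (x + σ) y - φ x y) / σ) + m * (2 * x + σ) * φ (x - σ) y)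
        (2 * 1 * ((φ (x + σ) t - φ x t) / σ) +
          2 * t * ((deriv (φ (x + σ)) t - deriv (φ x) t) / σ) +
          m * (2 * x + σ) * deriv (φ (x - σ)) t) t :=
      (((hasDerivAt_id t).const_mul (2 : ℝ)).mul
        (((h (x + σ)).sub (h x)).div_const σ)).add
        (HasDerivAt.const_mul (m * (2 * x + σ)) (h (x - σ)))
    simp only [Eop, Kop, Dx, Dt, Tinv]
    rw [show Kop σ m φ x = (fun y => 2 * y * ((φ (x + σ) y - φ x y) / σ)
      + m * (2 * x + σ) * φ (x - σ) y) from rfl, hK.deriv]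
    simp only [add_sub_cancel_right, sub_add_cancel]
    field_simp
    ring
  · intro x t
    have h : ∀ a : ℝ, HasDerivAt (φ a) (deriv (φ a) t) t := fun a => (hd a t).hasDerivAt
    have h2 : HasDerivAt (deriv (φ x)) (deriv (deriv (φ x)) t) t := (hd2 x t).hasDerivAt
    have hE : HasDerivAt
        (fun y => ((φ (x + σ + σ) y - φ (x + σ) y) / σ - (φ (x + σ) y - φ x y) / σ) / σ
          - 2 * m * deriv (φ x) y)
        ((((deriv (φ (x + σ + σ)) t - deriv (φ (x + σ)) t) / σ
          - (deriv (φ (x + σ)) t - deriv (φ x) t) / σ) / σ)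
          - 2 * m * deriv (deriv (φ x)) t) t :=
      (((((h (x + σ + σ)).sub (h (x + σ))).div_const σ).sub
        (((h (x + σ)).sub (h x)).div_const σ)).div_const σ).sub
        (HasDerivAt.const_mul (2 * m) h2)
    simp only [Eop, Dx, Dt]
    rw [show Dt φ x = deriv (φ x) from rfl,
      show Eop σ m φ x = (fun y => ((φ (x + σ + σ) y - φ (x + σ) y) / σ
        - (φ (x + σ) y - φ x y) / σ) / σ - 2 * m * deriv (φ x) y) from rfl, hE.deriv]
    ring
  · intro x t
    have h : ∀ a : ℝ, HasDerivAt (φ a) (deriv (φ a) t) t := fun a => (hd a t).hasDerivAt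
    have hD : ∀ a : ℝ, HasDerivAt (fun y => (φ (a + σ) y - φ a y) / σ)
        ((deriv (φ (a + σ)) t - deriv (φ a) t) / σ) t :=
      fun a => ((h (a + σ)).sub (h a)).div_const σ
    simp only [Eop, Dx, Dt]
    rw [show Dx σ φ x = (fun y => (φ (x + σ) y - φ x y) / σ) from rfl, (hD x).deriv]
    field_simp
    ring
  · intro x t
    have h : ∀ a : ℝ, HasDerivAt (φ a) (deriv (φ a) t) t := fun a => (hd a t).hasDerivAt
    have hM : HasDerivAt (fun y => m * φ x y) (m * deriv (φ x) t) t :=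
      HasDerivAt.const_mul m (h x)
    simp only [Eop, Mop, Dx, Dt]
    rw [show Mop m φ x = (fun y => m * φ x y) from rfl, hM.deriv]
    ring
end
end
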